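/- Let (B,L) be a Hadamard pair, Λ_0 ⊂ Π(B) a spectrum of some Borel probability measure μ_0 on ℝ^d with SΛ_0 ⊂ Λ_0. Then Λ := ∩_{n≥0} SⁿΛ_0 is an orthogonal set in L²(μ_B), i.e. ∫ e^{2πi(λ_1-λ_2)·x} dμ_B(x) = 0 for distinct λ_1, λ_2 ∈ Λ, where μ_B is the invariant measure of the IFS (τ_b)_{b∈B}. -/

import Mathlib

open MeasureTheory Complex Finset Matrix
open scoped ENNReal NNReal

noncomputable def tauMap {d : ℕ} (Rr : Matrix (Fin d) (Fin d) ℝ) (b : Fin d → ℤ)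
    (x : Fin d → ℝ) : Fin d → ℝ :=
  Rr⁻¹.mulVec (x + fun i => (b i : ℝ))

noncomputable def measOp {d : ℕ} (Rr : Matrix (Fin d) (Fin d) ℝ) (B : Finset (Fin d → ℤ))
    (μ : Measure (Fin d → ℝ)) : Measure (Fin d → ℝ) :=
  (B.card : ℝ≥0∞)⁻¹ • ∑ b ∈ B, Measure.map (tauMap Rr b) μ

noncomputable def fourierTf {d : ℕ} (μ : Measure (Fin d → ℝ)) (x : Fin d → ℝ) : ℂ :=
  ∫ t, Complex.exp (2 * Real.pi * Complex.I * ((∑ i, x i * t i : ℝ) : ℂ)) ∂μ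

noncomputable def expFn {d : ℕ} (l : Fin d → ℝ) (x : Fin d → ℝ) : ℂ :=
  Complex.exp (2 * Real.pi * Complex.I * ((∑ i, l i * x i : ℝ) : ℂ))

/-- `Λ` is a spectrum for `μ`: the exponentials `e_λ`, `λ ∈ Λ`, form an orthonormal
basis of `L²(μ)`, expressed as orthonormality together with completeness. -/
def IsSpectral {d : ℕ} (μ : Measure (Fin d → ℝ)) (Λ : Set (Fin d → ℝ)) : Prop :=
  (∀ l1 ∈ Λ, ∀ l2 ∈ Λ, l1 ≠ l2 →
      ∫ x, expFn l1 x * (starRingEnd ℂ) (expFn l2 x) ∂μ = 0) ∧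
  (∀ f : (Fin d → ℝ) → ℂ, MemLp f 2 μ →
      (∀ l ∈ Λ, ∫ x, f x * (starRingEnd ℂ) (expFn l x) ∂μ = 0) → f =ᵐ[μ] 0)

noncomputable def hadamardMatrix {d : ℕ} (R : Matrix (Fin d) (Fin d) ℤ)
    (B L : Finset (Fin d → ℤ)) : Matrix {b // b ∈ B} {l // l ∈ L} ℂ :=
  fun b l => (Real.sqrt B.card : ℂ)⁻¹ * Complex.exp (2 * Real.pi * Complex.I *
    ((∑ i, ((R.map ((↑) : ℤ → ℝ))⁻¹.mulVec (fun j => ((b : Fin d → ℤ) j : ℝ))) i *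
      ((l : Fin d → ℤ) i : ℝ) : ℝ) : ℂ))

def IsHadamardPair {d : ℕ} (R : Matrix (Fin d) (Fin d) ℤ)
    (B L : Finset (Fin d → ℤ)) : Prop :=
  (hadamardMatrix R B L)ᴴ * hadamardMatrix R B L = 1 ∧
  hadamardMatrix R B L * (hadamardMatrix R B L)ᴴ = 1

def PiSet {d : ℕ} (B : Finset (Fin d → ℤ)) : Set (Fin d → ℝ) :=
  {γ | ∀ b ∈ B, ∃ m : ℤ, (∑ i, γ i * (b i : ℝ)) = (m : ℝ)}

/-- `SΛ = ∪_{l∈L} (R^T Λ + l)`. -/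
def specOp {d : ℕ} (R : Matrix (Fin d) (Fin d) ℤ) (L : Finset (Fin d → ℤ))
    (Λ : Set (Fin d → ℝ)) : Set (Fin d → ℝ) :=
  ⋃ l ∈ L, (fun γ => ((R.map ((↑) : ℤ → ℝ))ᵀ).mulVec γ + fun i => (l i : ℝ)) '' Λ

/-!
Write `ν̂(ξ) = ∫ e_ξ dν`. Each map `τ_b` is affine, so `(Tν)^(ξ) = m_B(ξ) ν̂(R⁻ᵀξ)` with the mask
`m_B(ξ) = N⁻¹ ∑_{b∈B} e^{2πi⟨R⁻¹b, ξ⟩}`, and hence `(Tⁿν)^(ξ) = Pₙ(ξ) ν̂(R⁻ⁿᵀξ)` with `Pₙ`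
independent of `ν`. For `λᵢ = Rᵀγᵢ + lᵢ ∈ SΛ`, `γᵢ ∈ Π(B)`, the integrality of `⟨γᵢ, b⟩` gives
`m_B(λ₁ - λ₂) = m_B(l₁ - l₂)`, which vanishes for `l₁ ≠ l₂` by the Hadamard property; if `l₁ = l₂`
the other factor is `ν̂(γ₁ - γ₂)`. So orthogonality of `Λ₀` in `L²(μ₀)` propagates to `SⁿΛ₀` in
`L²(Tⁿμ₀)`. Finally, for `λ₁ ≠ λ₂` in `⋂ₙ SⁿΛ₀` and `ξ = λ₁ - λ₂`: since `R⁻¹` has spectral radius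
`< 1`, `R⁻ⁿᵀξ → 0` and `μ̂₀(R⁻ⁿᵀξ) → 1`, so `0 = (Tⁿμ₀)^(ξ)` forces `Pₙ(ξ) = 0` for some `n`, and
then `μ̂_B(ξ) = (Tⁿμ_B)^(ξ) = 0`.
-/

open Filter
open scoped Topology

section ExpFn

variable {d : ℕ}

private lemma expFn_eq (l x : Fin d → ℝ) :
    expFn l x = Complex.exp (2 * Real.pi * Complex.I * ((l ⬝ᵥ x : ℝ) : ℂ)) := rfl

lemma expFn_add_left (a b x : Fin d → ℝ) : expFn (a + b) x = expFn a x * expFn b x := by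
  simp only [expFn_eq, add_dotProduct, ← Complex.exp_add]
  push_cast
  ring_nf

lemma expFn_add_right (l x y : Fin d → ℝ) : expFn l (x + y) = expFn l x * expFn l y := by
  simp only [expFn_eq, dotProduct_add, ← Complex.exp_add]
  push_cast
  ring_nf

lemma expFn_comm (l x : Fin d → ℝ) : expFn l x = expFn x l := by
  rw [expFn_eq, expFn_eq, dotProduct_comm]

lemma expFn_mulVec (M : Matrix (Fin d) (Fin d) ℝ) (l x : Fin d → ℝ) :
    expFn l (M *ᵥ x) = expFn (Mᵀ *ᵥ l) x := by
  rw [expFn_eq, expFn_eq, dotProduct_mulVec, ← mulVec_transpose, dotProduct_comm]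

lemma expFn_sub_left (a b x : Fin d → ℝ) :
    expFn (a - b) x = expFn a x * starRingEnd ℂ (expFn b x) := by
  simp only [expFn_eq, sub_dotProduct, ← Complex.exp_conj, ← Complex.exp_add, map_mul,
    Complex.conj_I, Complex.conj_ofReal, map_ofNat]
  push_cast
  ring_nf

lemma expFn_zero_left (x : Fin d → ℝ) : expFn 0 x = 1 := by
  simp [expFn_eq]

lemma norm_expFn (l x : Fin d → ℝ) : ‖expFn l x‖ = 1 := by
  rw [expFn_eq, Complex.norm_exp]
  simp

lemma continuous_expFn_uncurry : Continuous fun p : (Fin d → ℝ) × (Fin d → ℝ) => expFn p.1 p.2 := by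
  unfold expFn
  fun_prop

lemma expFn_eq_one_of_mem_PiSet {B : Finset (Fin d → ℤ)} {γ : Fin d → ℝ} (hγ : γ ∈ PiSet B)
    {b : Fin d → ℤ} (hb : b ∈ B) : expFn γ (fun i => (b i : ℝ)) = 1 := by
  obtain ⟨m, hm⟩ := hγ b hb
  rw [expFn, hm, ← Complex.exp_int_mul_two_pi_mul_I m]
  push_cast
  ring_nf

lemma sub_mem_PiSet {B : Finset (Fin d → ℤ)} {γ₁ γ₂ : Fin d → ℝ} (h₁ : γ₁ ∈ PiSet B)
    (h₂ : γ₂ ∈ PiSet B) : γ₁ - γ₂ ∈ PiSet B := by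
  intro b hb
  obtain ⟨m₁, hm₁⟩ := h₁ b hb
  obtain ⟨m₂, hm₂⟩ := h₂ b hb
  refine ⟨m₁ - m₂, ?_⟩
  simp only [Pi.sub_apply, sub_mul, Finset.sum_sub_distrib, hm₁, hm₂, Int.cast_sub]

end ExpFn

section Spectrum

theorem tendsto_pow_atTop_nhds_zero_of_forall_spectrum_norm_lt_one {A : Type*} [NormedRing A]
    [NormedAlgebra ℂ A] [CompleteSpace A] {a : A} (h : ∀ z ∈ spectrum ℂ a, ‖z‖ < 1) :
    Tendsto (fun n : ℕ => a ^ n) atTop (𝓝 0) := by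
  rcases subsingleton_or_nontrivial A with hA | hA
  · simpa only [Subsingleton.elim _ (0 : A)] using tendsto_const_nhds
  obtain ⟨c, hρc, hc1⟩ := ENNReal.lt_iff_exists_nnreal_btwn.mp
    (spectrum.spectralRadius_lt_of_forall_lt a (r := 1) fun z hz => by exact_mod_cast h z hz)
  -- Gelfand's formula: `‖a ^ n‖ ^ (1 / n)` eventually drops below `c < 1`.
  have hbound : ∀ᶠ n : ℕ in atTop, ‖a ^ n‖ ≤ c ^ n := by
    have hgelfand := spectrum.pow_nnnorm_pow_one_div_tendsto_nhds_spectralRadius a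
    filter_upwards [hgelfand.eventually_lt_const hρc, eventually_ne_atTop 0] with n hn hn0
    rw [one_div, ← ENNReal.coe_rpow_of_nonneg _ (by positivity), ENNReal.coe_lt_coe,
      NNReal.rpow_inv_lt_iff (by positivity), NNReal.rpow_natCast] at hn
    exact_mod_cast hn.le
  exact squeeze_zero_norm' hbound
    (tendsto_pow_atTop_nhds_zero_of_lt_one c.coe_nonneg (by exact_mod_cast hc1))

theorem norm_lt_one_of_mem_spectrum_inv {A : Type*} [Ring A] [Algebra ℂ A] {u : Aˣ}
    (h : ∀ z ∈ spectrum ℂ (u : A), 1 < ‖z‖) {z : ℂ} (hz : z ∈ spectrum ℂ (↑u⁻¹ : A)) :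
    ‖z‖ < 1 := by
  have := h _ (spectrum.inv₀_mem_inv_iff.mp (by rwa [inv_inv]))
  rw [norm_inv] at this
  exact (one_lt_inv_iff₀.mp this).2

variable {n : Type*} [Fintype n] [DecidableEq n]

theorem map_ofRealHom_nonsing_inv {M : Matrix n n ℝ} (hM : IsUnit M.det) :
    (M.map ofRealHom)⁻¹ = M⁻¹.map ofRealHom := by
  refine inv_eq_right_inv ?_
  rw [← Matrix.map_mul, M.mul_nonsing_inv hM, Matrix.map_one _ (map_zero _) (map_one _)]

theorem isUnit_map_ofRealHom_of_forall_spectrum {M : Matrix n n ℝ}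
    (hM : ∀ z ∈ spectrum ℂ (M.map ofRealHom), 1 < ‖z‖) : IsUnit (M.map ofRealHom) := by
  by_contra hnu
  exact absurd (hM 0 ((spectrum.zero_mem_iff ℂ).mpr hnu)) (by norm_num)

theorem isUnit_det_of_forall_spectrum {M : Matrix n n ℝ}
    (hM : ∀ z ∈ spectrum ℂ (M.map ofRealHom), 1 < ‖z‖) : IsUnit M.det := by
  have := isUnit_map_ofRealHom_of_forall_spectrum hM
  rw [(M.map ofRealHom).isUnit_iff_isUnit_det, ← RingHom.mapMatrix_apply, ← RingHom.map_det]
    at this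
  exact (isUnit_map_iff ofRealHom _).mp this

attribute [local instance] Matrix.linftyOpNormedRing Matrix.linftyOpNormedAlgebra in
theorem tendsto_inv_pow_atTop_nhds_zero {M : Matrix n n ℝ}
    (hM : ∀ z ∈ spectrum ℂ (M.map ofRealHom), 1 < ‖z‖) :
    Tendsto (fun k : ℕ => M⁻¹ ^ k) atTop (𝓝 0) := by
  have hunit := isUnit_map_ofRealHom_of_forall_spectrum hM
  have hinv : Tendsto (fun k : ℕ => (M.map ofRealHom)⁻¹ ^ k) atTop (𝓝 0) := by
    have : CompleteSpace (Matrix n n ℂ) := FiniteDimensional.complete ℂ _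
    refine tendsto_pow_atTop_nhds_zero_of_forall_spectrum_norm_lt_one fun z hz => ?_
    rw [← hunit.unit_spec, ← Matrix.coe_units_inv] at hz
    exact norm_lt_one_of_mem_spectrum_inv (by rwa [hunit.unit_spec]) hz
  convert ((continuous_id.matrix_map continuous_re).tendsto 0).comp hinv using 1
  · ext k : 1
    rw [Function.comp_apply, map_ofRealHom_nonsing_inv (isUnit_det_of_forall_spectrum hM),
      ← Matrix.map_pow]
    ext i j
    simp
  · simp

theorem tendsto_transpose_inv_pow_mulVec {M : Matrix n n ℝ}
    (hM : ∀ z ∈ spectrum ℂ (M.map ofRealHom), 1 < ‖z‖) (v : n → ℝ) :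
    Tendsto (fun k : ℕ => (M⁻¹ᵀ ^ k) *ᵥ v) atTop (𝓝 0) := by
  have := ((continuous_id.matrix_transpose.matrix_mulVec (continuous_const (y := v))).tendsto
    0).comp (tendsto_inv_pow_atTop_nhds_zero hM)
  simpa only [Function.comp_def, id, transpose_pow, transpose_zero, zero_mulVec] using this

end Spectrum

section Mask

variable {d : ℕ} (Rr : Matrix (Fin d) (Fin d) ℝ) (B : Finset (Fin d → ℤ))

noncomputable def maskFn (ξ : Fin d → ℝ) : ℂ :=
  (B.card : ℂ)⁻¹ * ∑ b ∈ B, expFn ξ (Rr⁻¹ *ᵥ fun i => (b i : ℝ))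

lemma expFn_tauMap (b : Fin d → ℤ) (ξ x : Fin d → ℝ) :
    expFn ξ (tauMap Rr b x) = expFn ξ (Rr⁻¹ *ᵥ fun i => (b i : ℝ)) * expFn (Rr⁻¹ᵀ *ᵥ ξ) x := by
  rw [tauMap, mulVec_add, expFn_add_right, expFn_mulVec, mul_comm]

lemma continuous_tauMap (b : Fin d → ℤ) : Continuous (tauMap Rr b) :=
  continuous_const.matrix_mulVec (continuous_id.add continuous_const)

instance isFiniteMeasure_measOp (μ : Measure (Fin d → ℝ)) [IsFiniteMeasure μ] :
    IsFiniteMeasure (measOp Rr B μ) := by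
  rcases B.eq_empty_or_nonempty with rfl | hB
  · simp only [measOp, Finset.sum_empty, smul_zero]
    infer_instance
  · have : (B.card : ℝ≥0∞)⁻¹ ≠ ⊤ := ENNReal.inv_ne_top.mpr (by simpa using hB.ne_empty)
    rw [measOp, ← ENNReal.coe_toNNReal this]
    exact isFiniteMeasureSMulNNReal

lemma isFiniteMeasure_iterate_measOp (μ : Measure (Fin d → ℝ)) [IsFiniteMeasure μ] (n : ℕ) :
    IsFiniteMeasure ((measOp Rr B)^[n] μ) := by
  induction n with
  | zero => assumption
  | succ n ih =>
    rw [Function.iterate_succ_apply']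
    infer_instance

lemma integral_expFn_measOp (ν : Measure (Fin d → ℝ)) [IsFiniteMeasure ν] (ξ : Fin d → ℝ) :
    ∫ x, expFn ξ x ∂(measOp Rr B ν) = maskFn Rr B ξ * ∫ x, expFn (Rr⁻¹ᵀ *ᵥ ξ) x ∂ν := by
  have hint : ∀ b ∈ B, Integrable (expFn ξ) (Measure.map (tauMap Rr b) ν) := fun b _ =>
    Integrable.of_bound (continuous_expFn_uncurry.comp
      (continuous_const.prodMk continuous_id)).aestronglyMeasurable 1
      (ae_of_all _ fun x => (norm_expFn ξ x).le)
  have hmap : ∀ b ∈ B, ∫ x, expFn ξ x ∂(Measure.map (tauMap Rr b) ν)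
      = expFn ξ (Rr⁻¹ *ᵥ fun i => (b i : ℝ)) * ∫ x, expFn (Rr⁻¹ᵀ *ᵥ ξ) x ∂ν := fun b _ => by
    rw [integral_map (continuous_tauMap Rr b).aemeasurable (hint b ‹_›).aestronglyMeasurable]
    simp only [expFn_tauMap, integral_const_mul]
  rw [measOp, integral_smul_measure, integral_finsetSum_measure hint, Finset.sum_congr rfl hmap,
    maskFn, ← Finset.sum_mul, ENNReal.toReal_inv, ENNReal.toReal_natCast, Complex.real_smul]
  push_cast
  ring

lemma integral_expFn_iterate_measOp (n : ℕ) (ν : Measure (Fin d → ℝ)) [IsFiniteMeasure ν]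
    (ξ : Fin d → ℝ) :
    ∫ x, expFn ξ x ∂((measOp Rr B)^[n] ν)
      = (∏ k ∈ Finset.range n, maskFn Rr B ((Rr⁻¹ᵀ ^ k) *ᵥ ξ))
        * ∫ x, expFn ((Rr⁻¹ᵀ ^ n) *ᵥ ξ) x ∂ν := by
  induction n generalizing ν with
  | zero => simp
  | succ n ih =>
    rw [Function.iterate_succ_apply, ih, integral_expFn_measOp, mulVec_mulVec, ← pow_succ',
      Finset.prod_range_succ, mul_assoc]

end Mask

section Orthogonality

variable {d : ℕ}

def ExpOrthogonal (μ : Measure (Fin d → ℝ)) (Λ : Set (Fin d → ℝ)) : Prop :=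
  Λ.Pairwise fun l₁ l₂ => ∫ x, expFn (l₁ - l₂) x ∂μ = 0

lemma IsSpectral.expOrthogonal {μ : Measure (Fin d → ℝ)} {Λ : Set (Fin d → ℝ)}
    (h : IsSpectral μ Λ) : ExpOrthogonal μ Λ := fun l₁ h₁ l₂ h₂ hne => by
  simpa only [expFn_sub_left] using h.1 l₁ h₁ l₂ h₂ hne

lemma maskFn_eq_zero_of_isHadamardPair {R : Matrix (Fin d) (Fin d) ℤ}
    {B L : Finset (Fin d → ℤ)} (hH : IsHadamardPair R B L) {t₁ t₂ : Fin d → ℤ} (h₁ : t₁ ∈ L)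
    (h₂ : t₂ ∈ L) (hne : t₁ ≠ t₂) :
    maskFn (R.map (↑)) B ((fun i => (t₁ i : ℝ)) - fun i => (t₂ i : ℝ)) = 0 := by
  have hentry : ((hadamardMatrix R B L)ᴴ * hadamardMatrix R B L) ⟨t₂, h₂⟩ ⟨t₁, h₁⟩ = 0 := by
    rw [hH.1, one_apply_ne (by simpa [Subtype.ext_iff] using hne.symm)]
  have hsqrt : ((Real.sqrt B.card : ℂ))⁻¹ * ((Real.sqrt B.card : ℂ))⁻¹ = (B.card : ℂ)⁻¹ := by
    rw [← mul_inv, ← Complex.ofReal_mul, Real.mul_self_sqrt (Nat.cast_nonneg _),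
      Complex.ofReal_natCast]
  -- The entries of the Hadamard matrix are `N^{-1/2} e_{R⁻¹b}(l)`.
  have hterm : ∀ b : B, star (hadamardMatrix R B L b ⟨t₂, h₂⟩)
      * hadamardMatrix R B L b ⟨t₁, h₁⟩
      = (B.card : ℂ)⁻¹ * expFn ((fun i => (t₁ i : ℝ)) - fun i => (t₂ i : ℝ))
          ((R.map (↑))⁻¹ *ᵥ fun i => ((b : Fin d → ℤ) i : ℝ)) := fun b => by
    change starRingEnd ℂ (_ * expFn _ _) * (_ * expFn _ _) = _
    rw [expFn_sub_left, expFn_comm (fun i => (t₁ i : ℝ)), expFn_comm (fun i => (t₂ i : ℝ)),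
      map_mul, map_inv₀, Complex.conj_ofReal, ← hsqrt]
    ring
  rw [mul_apply] at hentry
  simp only [conjTranspose_apply, hterm, ← Finset.mul_sum] at hentry
  rwa [maskFn, ← Finset.sum_coe_sort B]

lemma maskFn_transpose_mulVec_add {Rr : Matrix (Fin d) (Fin d) ℝ} (hdet : IsUnit Rr.det)
    {B : Finset (Fin d → ℤ)} {γ : Fin d → ℝ} (hγ : γ ∈ PiSet B) (ξ : Fin d → ℝ) :
    maskFn Rr B (Rrᵀ *ᵥ γ + ξ) = maskFn Rr B ξ := by
  simp only [maskFn]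
  congr 1
  refine Finset.sum_congr rfl fun b hb => ?_
  rw [expFn_add_left, expFn_mulVec, mulVec_mulVec, ← transpose_mul, mul_nonsing_inv _ hdet,
    transpose_one, one_mulVec, expFn_eq_one_of_mem_PiSet hγ hb, one_mul]

lemma ExpOrthogonal.measOp_specOp {R : Matrix (Fin d) (Fin d) ℤ}
    (hdet : IsUnit (R.map (↑) : Matrix _ _ ℝ).det)
    {B L : Finset (Fin d → ℤ)} (hH : IsHadamardPair R B L) {μ : Measure (Fin d → ℝ)}
    [IsFiniteMeasure μ] {Λ : Set (Fin d → ℝ)} (hΛ : Λ ⊆ PiSet B) (h : ExpOrthogonal μ Λ) :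
    ExpOrthogonal (measOp (R.map (↑)) B μ) (specOp R L Λ) := by
  rintro _ hl₁ _ hl₂ hne
  simp only [specOp, Set.mem_iUnion, Set.mem_image] at hl₁ hl₂
  obtain ⟨t₁, ht₁, γ₁, hγ₁, rfl⟩ := hl₁
  obtain ⟨t₂, ht₂, γ₂, hγ₂, rfl⟩ := hl₂
  have hdiff : (R.map (↑))ᵀ *ᵥ γ₁ + (fun i => (t₁ i : ℝ))
        - ((R.map (↑))ᵀ *ᵥ γ₂ + fun i => (t₂ i : ℝ))
      = (R.map (↑))ᵀ *ᵥ (γ₁ - γ₂) + ((fun i => (t₁ i : ℝ)) - fun i => (t₂ i : ℝ)) := by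
    rw [mulVec_sub]
    abel
  rw [integral_expFn_measOp, hdiff]
  by_cases ht : t₁ = t₂
  · subst ht
    have hγ : γ₁ ≠ γ₂ := fun hγ => hne (by rw [hγ])
    rw [sub_self, add_zero, mulVec_mulVec, ← transpose_mul, mul_nonsing_inv _ hdet, transpose_one,
      one_mulVec, h hγ₁ hγ₂ hγ, mul_zero]
  · rw [maskFn_transpose_mulVec_add hdet (sub_mem_PiSet (hΛ hγ₁) (hΛ hγ₂)),
      maskFn_eq_zero_of_isHadamardPair hH ht₁ ht₂ ht, zero_mul]

lemma specOp_mono (R : Matrix (Fin d) (Fin d) ℤ) (L : Finset (Fin d → ℤ)) :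
    Monotone (specOp R L) := fun _ _ h =>
  Set.iUnion₂_mono fun _ _ => Set.image_mono h

lemma iterate_specOp_subset {R : Matrix (Fin d) (Fin d) ℤ} {L : Finset (Fin d → ℤ)}
    {Λ : Set (Fin d → ℝ)} (hS : specOp R L Λ ⊆ Λ) (n : ℕ) : (specOp R L)^[n] Λ ⊆ Λ := by
  induction n with
  | zero => exact subset_rfl
  | succ n ih =>
    rw [Function.iterate_succ_apply']
    exact (specOp_mono R L ih).trans hS

lemma ExpOrthogonal.iterate {R : Matrix (Fin d) (Fin d) ℤ}
    (hdet : IsUnit (R.map (↑) : Matrix _ _ ℝ).det) {B L : Finset (Fin d → ℤ)}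
    (hH : IsHadamardPair R B L) {μ : Measure (Fin d → ℝ)} [IsFiniteMeasure μ]
    {Λ : Set (Fin d → ℝ)} (hΛ : Λ ⊆ PiSet B) (hS : specOp R L Λ ⊆ Λ) (h : ExpOrthogonal μ Λ)
    (n : ℕ) : ExpOrthogonal ((measOp (R.map (↑)) B)^[n] μ) ((specOp R L)^[n] Λ) := by
  induction n with
  | zero => exact h
  | succ n ih =>
    have := isFiniteMeasure_iterate_measOp (R.map (↑)) B μ n
    rw [Function.iterate_succ_apply', Function.iterate_succ_apply']
    exact ih.measOp_specOp hdet hH ((iterate_specOp_subset hS n).trans hΛ)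

end Orthogonality

section Limit

variable {d : ℕ}

lemma continuous_integral_expFn (μ : Measure (Fin d → ℝ)) [IsFiniteMeasure μ] :
    Continuous fun ξ => ∫ x, expFn ξ x ∂μ :=
  continuous_of_dominated
    (fun _ => (continuous_expFn_uncurry.comp
      (continuous_const.prodMk continuous_id)).aestronglyMeasurable)
    (fun ξ => ae_of_all _ fun x => (norm_expFn ξ x).le) (integrable_const 1)
    (ae_of_all _ fun _ => continuous_expFn_uncurry.comp (continuous_id.prodMk continuous_const))

lemma integral_expFn_zero (μ : Measure (Fin d → ℝ)) [IsProbabilityMeasure μ] :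
    ∫ x, expFn 0 x ∂μ = 1 := by
  simp [expFn_zero_left]

lemma integral_expFn_eq_zero_of_iterate {Rr : Matrix (Fin d) (Fin d) ℝ} {B : Finset (Fin d → ℤ)}
    {ξ : Fin d → ℝ} (hξ : Tendsto (fun n => (Rr⁻¹ᵀ ^ n) *ᵥ ξ) atTop (𝓝 0))
    (μ₀ : Measure (Fin d → ℝ)) [IsProbabilityMeasure μ₀]
    (h₀ : ∀ n, ∫ x, expFn ξ x ∂((measOp Rr B)^[n] μ₀) = 0)
    {μ : Measure (Fin d → ℝ)} [IsFiniteMeasure μ] (hμ : measOp Rr B μ = μ) :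
    ∫ x, expFn ξ x ∂μ = 0 := by
  have hlim : Tendsto (fun n => ∫ x, expFn ((Rr⁻¹ᵀ ^ n) *ᵥ ξ) x ∂μ₀) atTop (𝓝 1) := by
    rw [← integral_expFn_zero μ₀]
    exact ((continuous_integral_expFn μ₀).tendsto 0).comp hξ
  obtain ⟨n, hn⟩ := (hlim.eventually_ne one_ne_zero).exists
  -- Both transforms factor through the same product of masks, which must vanish.
  have hprod : ∏ k ∈ Finset.range n, maskFn Rr B ((Rr⁻¹ᵀ ^ k) *ᵥ ξ) = 0 := by
    have := h₀ n
    rw [integral_expFn_iterate_measOp] at this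
    exact (mul_eq_zero.mp this).resolve_right hn
  rw [← Function.iterate_fixed hμ n, integral_expFn_iterate_measOp, hprod, zero_mul]

end Limit

theorem orthogonal_of_iterated_spectra_general {d : ℕ} (R : Matrix (Fin d) (Fin d) ℤ)
    (hRexp : ∀ z ∈ spectrum ℂ (R.map ((↑) : ℤ → ℂ)), 1 < ‖z‖)
    (B L : Finset (Fin d → ℤ))
    (hH : IsHadamardPair R B L)
    (μ₀ : Measure (Fin d → ℝ)) [IsProbabilityMeasure μ₀]
    (Λ₀ : Set (Fin d → ℝ)) (hΛ₀ : Λ₀ ⊆ PiSet B) (hspec : IsSpectral μ₀ Λ₀)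
    (hS : specOp R L Λ₀ ⊆ Λ₀)
    (μB : Measure (Fin d → ℝ)) [IsProbabilityMeasure μB]
    (hinv : measOp (R.map ((↑) : ℤ → ℝ)) B μB = μB) :
    ∀ l1 ∈ ⋂ n : ℕ, (specOp R L)^[n] Λ₀, ∀ l2 ∈ ⋂ n : ℕ, (specOp R L)^[n] Λ₀,
      l1 ≠ l2 → ∫ x, expFn (l1 - l2) x ∂μB = 0 := by
  intro l₁ h₁ l₂ h₂ hne
  have hR : ∀ z ∈ spectrum ℂ ((R.map ((↑) : ℤ → ℝ)).map ofRealHom), 1 < ‖z‖ := by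
    simpa [Matrix.map_map, Function.comp_def] using hRexp
  have horth := hspec.expOrthogonal.iterate (isUnit_det_of_forall_spectrum hR) hH hΛ₀ hS
  exact integral_expFn_eq_zero_of_iterate (tendsto_transpose_inv_pow_mulVec hR _) μ₀
    (fun n => horth n (Set.mem_iInter.mp h₁ n) (Set.mem_iInter.mp h₂ n) hne) hinv

theorem orthogonal_of_iterated_spectra {d N : ℕ} (R : Matrix (Fin d) (Fin d) ℤ)
    (hRexp : ∀ z ∈ spectrum ℂ (R.map ((↑) : ℤ → ℂ)), 1 < ‖z‖)
    (B L : Finset (Fin d → ℤ)) (hBcard : B.card = N) (hLcard : L.card = N) (hN : 2 ≤ N)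
    (hH : IsHadamardPair R B L)
    (μ₀ : Measure (Fin d → ℝ)) [IsProbabilityMeasure μ₀]
    (Λ₀ : Set (Fin d → ℝ)) (hΛ₀ : Λ₀ ⊆ PiSet B) (hspec : IsSpectral μ₀ Λ₀)
    (hS : specOp R L Λ₀ ⊆ Λ₀)
    (μB : Measure (Fin d → ℝ)) [IsProbabilityMeasure μB]
    (hinv : measOp (R.map ((↑) : ℤ → ℝ)) B μB = μB) :
    ∀ l1 ∈ ⋂ n : ℕ, (specOp R L)^[n] Λ₀, ∀ l2 ∈ ⋂ n : ℕ, (specOp R L)^[n] Λ₀,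
      l1 ≠ l2 → ∫ x, expFn (l1 - l2) x ∂μB = 0 :=
  orthogonal_of_iterated_spectra_general R hRexp B L hH μ₀ Λ₀ hΛ₀ hspec hS μB hinv
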